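/- arXiv:math/0111082 — 2 statements merged into one kernel-verified Lean document; each statement's English description precedes it below -/
import Mathlib

section
/- Every homogeneous cyclically invariant polynomial φ ∈ ℂ[θ₁,…,θₙ] of positive degree d splits as φ = φ_dec + φ_res, where φ_dec is cyclically decomposable and φ_res is a constant multiple of Σᵢ θᵢ^d (interpreted as 0 when n is odd, and where nontrivial φ_res can occur only when d is even). -/
open MvPolynomial

/-!
Let `I` be the ideal generated by the edge sums `θ_{k-1} + θ_k`. Modulo `I` every `θ_i` is
congruent to `(-1)^i θ_0`, so a homogeneous `f` of degree `d` is congruent to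
`f(1, -1, …, 1, -1) θ_0^d`; for odd `n`, going once around the cycle gives `θ_0 ≡ -θ_0`, so `f ∈ I`
outright. Hence subtracting the right multiple of `Σ θ_i^d` moves `φ` into `I` (for even `n` and
odd `d`, cyclic invariance already forces `φ(1, -1, …, 1, -1) = 0`). Finally, a cyclically
invariant element `Σ_k c_k (θ_{k-1} + θ_k)` of `I` equals its average over all cyclic shifts,
which regroups as `Σ_k (θ_{k-1} + θ_k) ψ(θ_{·+k})` with `ψ = n⁻¹ Σ_l c_{-l}(θ_{·+l})`.
-/

theorem MvPolynomial.IsHomogeneous.aeval_smul {σ R S : Type*} [CommSemiring R] [CommSemiring S]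
    [Algebra R S] {f : MvPolynomial σ R} {d : ℕ} (hf : f.IsHomogeneous d) (w : σ → R) (y : S) :
    MvPolynomial.aeval (fun i => w i • y) f = eval w f • y ^ d := by
  rw [aeval_def, eval₂_eq, eval_eq, Finset.sum_smul]
  refine Finset.sum_congr rfl fun m hm => ?_
  have hdeg : ∑ i ∈ m.support, m i = d := by
    simpa [Finsupp.weight_apply, Finsupp.sum] using hf (mem_support_iff.mp hm)
  simp_rw [smul_pow, Algebra.smul_def]
  rw [Finset.prod_mul_distrib, ← map_prod, Finset.prod_pow_eq_pow_sum, hdeg, map_mul]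
  ring

namespace CyclicDecomposition

open Fin.NatCast Fin.CommRing

section CommRing

variable {R : Type*} [CommRing R] {n : ℕ}

variable (R n) in
def alternatingPoint : Fin n → R := fun i => (-1) ^ (i : ℕ)

lemma eval_alternatingPoint_sum_X_pow {d : ℕ} (hd : Even d) :
    eval (alternatingPoint R n) (∑ i : Fin n, X i ^ d) = n := by
  have h : ∀ i : Fin n, ((-1 : R) ^ (i : ℕ)) ^ d = 1 := fun i => by
    rw [← pow_mul, mul_comm, pow_mul, hd.neg_one_pow, one_pow]
  simp [alternatingPoint, h]

variable [NeZero n]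

lemma alternatingPoint_add_one (hn : Even n) (i : Fin n) :
    alternatingPoint R n (i + 1) = -alternatingPoint R n i := by
  have hmod : ∀ a : ℕ, (-1 : R) ^ (a % n) = (-1) ^ a := fun a => by
    rw [neg_one_pow_eq_pow_mod_two, Nat.mod_mod_of_dvd _ (even_iff_two_dvd.mp hn),
      ← neg_one_pow_eq_pow_mod_two]
  simp only [alternatingPoint, Fin.val_add, Fin.val_one', hmod, pow_add, pow_one, mul_neg_one]

variable (R n) in
noncomputable def edgeIdeal : Ideal (MvPolynomial (Fin n) R) :=
  Ideal.span (Set.range fun k : Fin n => X (k - 1) + X k)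

lemma edge_mem_edgeIdeal (k : Fin n) :
    (X (k - 1) + X k : MvPolynomial (Fin n) R) ∈ edgeIdeal R n :=
  Ideal.subset_span ⟨k, rfl⟩

local notation "π" => Ideal.Quotient.mk (edgeIdeal R n)

lemma mk_X_natCast (m : ℕ) : π (X (m : Fin n)) = (-1 : R) ^ m • π (X 0) := by
  induction m with
  | zero => simp
  | succ m ih =>
    have hedge : π (X (m : Fin n)) + π (X ((m + 1 : ℕ) : Fin n)) = 0 := by
      have hcast : ((m + 1 : ℕ) : Fin n) = (m : Fin n) + 1 := by push_cast; rfl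
      have h := edge_mem_edgeIdeal (R := R) ((m : Fin n) + 1)
      rw [add_sub_cancel_right, ← hcast] at h
      rwa [← map_add, Ideal.Quotient.eq_zero_iff_mem]
    rw [eq_neg_of_add_eq_zero_right hedge, ih, pow_succ, mul_neg_one, neg_smul]

lemma mk_X (i : Fin n) : π (X i) = alternatingPoint R n i • π (X 0) := by
  simpa only [Fin.cast_val_eq_self, alternatingPoint] using mk_X_natCast (R := R) (n := n) i

lemma mk_eq_eval_alternatingPoint_smul {d : ℕ} {f : MvPolynomial (Fin n) R}
    (hf : f.IsHomogeneous d) : π f = eval (alternatingPoint R n) f • π (X 0) ^ d := by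
  have : π f = aeval (fun i => π (X i)) f :=
    congr($(aeval_unique (Ideal.Quotient.mkₐ R (edgeIdeal R n))) f)
  rw [this, funext mk_X, hf.aeval_smul]

lemma mem_edgeIdeal_of_eval_alternatingPoint_eq_zero {d : ℕ} {f : MvPolynomial (Fin n) R}
    (hf : f.IsHomogeneous d) (h : eval (alternatingPoint R n) f = 0) : f ∈ edgeIdeal R n := by
  rw [← Ideal.Quotient.eq_zero_iff_mem, mk_eq_eval_alternatingPoint_smul hf, h, zero_smul]

lemma rename_add_rename_add (j k : Fin n) (p : MvPolynomial (Fin n) R) :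
    rename (· + k) (rename (· + j) p) = rename (· + (j + k)) p := by
  simp only [rename_rename, Function.comp_def, add_assoc]

lemma rename_add_eq_self {φ : MvPolynomial (Fin n) R} (hcyc : rename (· + 1) φ = φ)
    (j : Fin n) : rename (· + j) φ = φ := by
  suffices h : ∀ m : ℕ, rename (· + (m : Fin n)) φ = φ by
    simpa only [Fin.cast_val_eq_self] using h j
  intro m
  induction m with
  | zero => simp only [Nat.cast_zero, add_zero]; exact rename_id_apply φ
  | succ m ih => rw [Nat.cast_succ, ← rename_add_rename_add, ih, hcyc]

lemma rename_add_sum_X_pow (j : Fin n) (d : ℕ) :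
    rename (· + j) (∑ i : Fin n, X i ^ d : MvPolynomial (Fin n) R) = ∑ i : Fin n, X i ^ d := by
  simp only [map_sum, map_pow, rename_X]
  exact Fintype.sum_equiv (Equiv.addRight j) _ _ fun _ => rfl

lemma rename_add_edge (j k : Fin n) :
    rename (· + j) (X (k - 1) + X k : MvPolynomial (Fin n) R) = X (k + j - 1) + X (k + j) := by
  rw [map_add, rename_X, rename_X, sub_add_eq_add_sub]

lemma sum_rename_add_sum_smul_edge (c : Fin n → MvPolynomial (Fin n) R) :
    ∑ j : Fin n, rename (· + j) (∑ k : Fin n, c k • (X (k - 1) + X k))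
      = ∑ k : Fin n, (X (k - 1) + X k) * rename (· + k) (∑ l : Fin n, rename (· + l) (c (-l))) := by
  calc _ = ∑ j : Fin n, ∑ k : Fin n, rename (· + j) (c (k - j)) * (X (k - 1) + X k) := by
          refine Finset.sum_congr rfl fun j _ => ?_
          rw [map_sum]
          refine Fintype.sum_equiv (Equiv.addRight j) _ _ fun k => ?_
          simp only [smul_eq_mul, map_mul, rename_add_edge, Equiv.coe_addRight,
            add_sub_cancel_right]
    _ = ∑ k : Fin n, ∑ j : Fin n, (X (k - 1) + X k) * rename (· + j) (c (k - j)) := by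
          rw [Finset.sum_comm]
          simp only [mul_comm]
    _ = _ := by
          refine Finset.sum_congr rfl fun k _ => ?_
          rw [map_sum, Finset.mul_sum]
          refine Fintype.sum_equiv (Equiv.subRight k) _ _ fun j => ?_
          simp only [rename_add_rename_add, Equiv.subRight_apply, sub_add_cancel, neg_sub]

end CommRing

section Field

variable {K : Type*} [Field K] [CharZero K] {n : ℕ} [NeZero n]

local notation "π" => Ideal.Quotient.mk (edgeIdeal K n)

lemma mk_X_zero_eq_zero (hn : Odd n) : π (X 0) = 0 := by
  have h := mk_X_natCast (R := K) (n := n) n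
  rw [Fin.natCast_self, hn.neg_one_pow, neg_one_smul, eq_neg_iff_add_eq_zero, ← two_smul K] at h
  exact (smul_eq_zero.mp h).resolve_left two_ne_zero

lemma mem_edgeIdeal_of_odd (hn : Odd n) {d : ℕ} (hd : 0 < d) {f : MvPolynomial (Fin n) K}
    (hf : f.IsHomogeneous d) : f ∈ edgeIdeal K n := by
  rw [← Ideal.Quotient.eq_zero_iff_mem, mk_eq_eval_alternatingPoint_smul hf, mk_X_zero_eq_zero hn,
    zero_pow hd.ne', smul_zero]

lemma eval_alternatingPoint_eq_zero (hn : Even n) {d : ℕ} (hd : Odd d)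
    {φ : MvPolynomial (Fin n) K} (hhom : φ.IsHomogeneous d) (hcyc : rename (· + 1) φ = φ) :
    eval (alternatingPoint K n) φ = 0 := by
  have h : eval (alternatingPoint K n) φ = -eval (alternatingPoint K n) φ := by
    conv_lhs => rw [← hcyc, eval_rename]
    simpa [Function.comp_def, alternatingPoint_add_one hn, hd.neg_one_pow] using
      hhom.aeval_smul (alternatingPoint K n) (-1 : K)
  exact CharZero.eq_neg_self_iff.mp h

lemma exists_sub_smul_sum_X_pow_mem_edgeIdeal {d : ℕ} (hd : 0 < d) {φ : MvPolynomial (Fin n) K}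
    (hhom : φ.IsHomogeneous d) (hcyc : rename (· + 1) φ = φ) :
    ∃ c : K, φ - c • ∑ i : Fin n, X i ^ d ∈ edgeIdeal K n ∧ (Odd n → c = 0) ∧ (c ≠ 0 → Even d) := by
  rcases Nat.even_or_odd n with hn | hn
  · rcases Nat.even_or_odd d with hde | hde
    · have hS : (∑ i : Fin n, X i ^ d : MvPolynomial (Fin n) K).IsHomogeneous d :=
        IsHomogeneous.sum _ _ _ fun i _ => isHomogeneous_X_pow i d
      have hcS := hS.C_mul (eval (alternatingPoint K n) φ / n)
      rw [← smul_eq_C_mul] at hcS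
      refine ⟨eval (alternatingPoint K n) φ / n,
        mem_edgeIdeal_of_eval_alternatingPoint_eq_zero (hhom.sub hcS) ?_,
        fun h => absurd hn (Nat.not_even_iff_odd.mpr h), fun _ => hde⟩
      rw [map_sub, smul_eq_C_mul, map_mul, eval_C, eval_alternatingPoint_sum_X_pow hde,
        div_mul_cancel₀ _ (Nat.cast_ne_zero.mpr (NeZero.ne n)), sub_self]
    · refine ⟨0, ?_, fun _ => rfl, fun h => absurd rfl h⟩
      rw [zero_smul, sub_zero]
      exact mem_edgeIdeal_of_eval_alternatingPoint_eq_zero hhom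
        (eval_alternatingPoint_eq_zero hn hde hhom hcyc)
  · refine ⟨0, ?_, fun _ => rfl, fun h => absurd rfl h⟩
    rw [zero_smul, sub_zero]
    exact mem_edgeIdeal_of_odd hn hd hhom

lemma exists_eq_sum_edge_mul_rename {f : MvPolynomial (Fin n) K}
    (hinv : ∀ j : Fin n, rename (· + j) f = f) (hf : f ∈ edgeIdeal K n) :
    ∃ ψ : MvPolynomial (Fin n) K, f = ∑ k : Fin n, (X (k - 1) + X k) * rename (· + k) ψ := by
  obtain ⟨c, hc⟩ := (Submodule.mem_span_range_iff_exists_fun _).mp hf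
  refine ⟨(n : K)⁻¹ • ∑ l : Fin n, rename (· + l) (c (-l)), ?_⟩
  have hn : (n : K) ≠ 0 := Nat.cast_ne_zero.mpr (NeZero.ne n)
  calc f = (n : K)⁻¹ • ∑ j : Fin n, rename (· + j) f := by
        simp only [hinv, Finset.sum_const, Finset.card_univ, Fintype.card_fin,
          ← Nat.cast_smul_eq_nsmul K, smul_smul, inv_mul_cancel₀ hn, one_smul]
    _ = _ := by
        rw [← hc, sum_rename_add_sum_smul_edge, Finset.smul_sum]
        simp only [map_smul, mul_smul_comm]

end Field

end CyclicDecomposition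

open CyclicDecomposition

/-- Every homogeneous cyclically invariant polynomial `φ` of positive degree `d` in `n`
(cyclically indexed) variables splits as `φ = φ_dec + φ_res`, where `φ_dec` is cyclically
decomposable (a cyclic symmetrization `∑_k (θ_{k-1} + θ_k)·ψ∘(shift by k)`) and
`φ_res = c • ∑ᵢ θᵢ^d` is residual; moreover `c = 0` if `n` is odd, and a nonzero `c`
can occur only when `d` is even. -/
theorem stmt3 (n : ℕ) [NeZero n] (d : ℕ) (hd : 0 < d)
    (φ : MvPolynomial (Fin n) ℂ)
    (hhom : φ.IsHomogeneous d)
    (hcyc : rename (fun i : Fin n => i + 1) φ = φ) :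
    ∃ (ψ : MvPolynomial (Fin n) ℂ) (c : ℂ),
      φ = (∑ k : Fin n, (X (k - 1) + X k) * rename (fun i : Fin n => i + k) ψ)
          + c • ∑ i : Fin n, X i ^ d
      ∧ (Odd n → c = 0) ∧ (c ≠ 0 → Even d) := by
  obtain ⟨c, hmem, hodd, heven⟩ := exists_sub_smul_sum_X_pow_mem_edgeIdeal hd hhom hcyc
  have hinv : ∀ j : Fin n, rename (· + j) (φ - c • ∑ i : Fin n, X i ^ d) =
      φ - c • ∑ i : Fin n, X i ^ d := fun j => by
    rw [map_sub, map_smul, rename_add_eq_self hcyc, rename_add_sum_X_pow]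
  obtain ⟨ψ, hψ⟩ := exists_eq_sum_edge_mul_rename hinv hmem
  exact ⟨ψ, c, by rw [← hψ, sub_add_cancel], hodd, heven⟩
end

section
/- The set of formal triangular differential operators D(s_*, ∂/∂s_*) = Σ_{‖n_*‖₊ ≤ ‖m_*‖₋} a_{m_*,n_*} s_*^{m_*} ∂^{|n_*|}/∂s_*^{n_*} with bounded s_*-degree forms a (non-commutative) subalgebra of the algebra of all formal differential operators on ℂ[[s_*]]: it is closed under addition, scalar multiplication, and composition. -/
/-! Formal triangular differential operators in the variables `s₀, s₁, s₂, …`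
(indexed by `ℕ`), acting on `ℂ[[s_*]] = MvPowerSeries ℕ ℂ`. -/

/-- `‖n‖₊ = ∑ᵢ (2i+1) nᵢ`. -/
def normPlus (n : ℕ →₀ ℕ) : ℕ := ∑ i ∈ n.support, (2 * i + 1) * n i

/-- `‖m‖₋ = ∑_{i ≥ 1} (2i−1) mᵢ` (the `i = 0` term vanishes thanks to truncated
subtraction). -/
def normMinus (m : ℕ →₀ ℕ) : ℕ := ∑ i ∈ m.support, (2 * i - 1) * m i

/-- Total degree `|m| = ∑ mᵢ` of the monomial `s^m`. -/
def degS (m : ℕ →₀ ℕ) : ℕ := ∑ i ∈ m.support, m i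

/-- The iterated formal partial derivative `∂^{|n|}/∂s^n`, defined coefficientwise:
`(∂^n f)_μ = (∏ᵢ (μᵢ+nᵢ)!/μᵢ!) · f_{μ+n}`. -/
noncomputable def pdMulti (n : ℕ →₀ ℕ) (f : MvPowerSeries ℕ ℂ) : MvPowerSeries ℕ ℂ :=
  fun μ => (∏ i ∈ n.support,
      ((Nat.factorial (μ i + n i) / Nat.factorial (μ i) : ℕ) : ℂ)) *
    MvPowerSeries.coeff (R := ℂ) (μ + n) f

/-- The formal differential operator `∑_{m,n} a_{m,n} s^m ∂^{|n|}/∂s^n` applied to `f`,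
each coefficient of the result being a `finsum` over the pairs of multi-indices `(m,n)`. -/
noncomputable def applyOp (a : ((ℕ →₀ ℕ) × (ℕ →₀ ℕ)) → ℂ) (f : MvPowerSeries ℕ ℂ) :
    MvPowerSeries ℕ ℂ :=
  fun μ => ∑ᶠ p : (ℕ →₀ ℕ) × (ℕ →₀ ℕ),
    a p * MvPowerSeries.coeff (R := ℂ) μ (MvPowerSeries.monomial (R := ℂ) p.1 1 * pdMulti p.2 f)

/-- `D` is a formal triangular differential operator: it is given by a symbol
`a = (a_{m,n})` supported on pairs with `‖n‖₊ ≤ ‖m‖₋` and with bounded `s`-degree. -/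
def IsTriangular (D : MvPowerSeries ℕ ℂ → MvPowerSeries ℕ ℂ) : Prop :=
  ∃ a : ((ℕ →₀ ℕ) × (ℕ →₀ ℕ)) → ℂ,
    (∀ p, a p ≠ 0 → normPlus p.2 ≤ normMinus p.1) ∧
    (∃ B, ∀ p, a p ≠ 0 → degS p.1 ≤ B) ∧
    (∀ f, D f = applyOp a f)

/-!
The coefficient of `D f` at `s^μ` only involves the finitely many `(m, n)` with `m ≤ μ` and
`‖n‖₊ ≤ ‖m‖₋ ≤ ‖μ‖₋` (the `window` of `μ`), so every formal sum is a finite sum and sums and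
scalar multiples are handled on the symbols. For composition, the Leibniz rule gives
`s^m ∂^n ∘ s^m' ∂^n' = ∑_{k ≤ n ⊓ m'} c_k s^(m + m' - k) ∂^(n + n' - k)`, and every term stays
triangular because `‖n + n' - k‖₊ = ‖n‖₊ + ‖n'‖₊ - ‖k‖₊ ≤ ‖m‖₋ + ‖m'‖₋ - ‖k‖₋ = ‖m + m' - k‖₋`,
while its `s`-degree is at most `|m| + |m'|`. Coefficientwise, and variable by variable, the
Leibniz rule is the Vandermonde identity for falling factorials.
-/

open Finset

theorem Nat.descFactorial_add (a b k : ℕ) :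
    (a + b).descFactorial k =
      ∑ ij ∈ antidiagonal k, k.choose ij.1 * (a.descFactorial ij.1 * b.descFactorial ij.2) := by
  have h := Ring.descPochhammer_smeval_add (R := ℤ) k (Commute.all (a : ℤ) b)
  simp only [← Nat.cast_add, Polynomial.descPochhammer_smeval_eq_descFactorial] at h
  exact_mod_cast h

-- The one-variable Leibniz rule
-- `∂^n ∘ s^m ∘ ∂^n' = ∑_j (n choose j) m.descFactorial j • s^(m - j) ∘ ∂^(n + n' - j)`
-- applied to `s^(z - m + n')`.
theorem Nat.descFactorial_mul_descFactorial_eq_sum {z m n n' : ℕ} (h : m ≤ z) :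
    z.descFactorial n * (z - m + n').descFactorial n' =
      ∑ j ∈ Iic (min n m),
        n.choose j * m.descFactorial j * (z - m + n').descFactorial (n + n' - j) := by
  have hsum : ∑ j ∈ Iic (min n m),
        n.choose j * m.descFactorial j * (z - m + n').descFactorial (n + n' - j) =
      ∑ j ∈ range (n + 1),
        n.choose j * m.descFactorial j * (z - m + n').descFactorial (n + n' - j) := by
    refine sum_subset (fun j hj => ?_) (fun j hj hj' => ?_)
    · simp only [mem_Iic, le_min_iff, mem_range] at hj ⊢; omega
    · simp only [mem_Iic, le_min_iff, mem_range, not_and_or, not_le] at hj hj'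
      rw [Nat.descFactorial_eq_zero_iff_lt.mpr (by omega), mul_zero, zero_mul]
  rw [hsum, ← Nat.add_sub_cancel' h, Nat.descFactorial_add, Nat.add_sub_cancel_left, sum_mul,
    Nat.sum_antidiagonal_eq_sum_range_succ
      (fun i j => n.choose i * (m.descFactorial i * (z - m).descFactorial j) *
        (z - m + n').descFactorial n')]
  refine sum_congr rfl fun j hj => ?_
  rw [mem_range] at hj
  have hprod : (z - m).descFactorial (n - j) * (z - m + n').descFactorial n' =
      (z - m + n').descFactorial (n + n' - j) := by
    simpa [show n + n' - j - n' = n - j by omega] using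
      Nat.descFactorial_mul_descFactorial (n := z - m + n') (show n' ≤ n + n' - j by omega)
  rw [← hprod]; ring

theorem Finsupp.sum_Iic_prod_eq_prod_sum {ι R : Type*} [DecidableEq ι] [CommSemiring R]
    {c : ι →₀ ℕ} {s : Finset ι} (hc : c.support ⊆ s) (T : ι → ℕ → R) :
    ∑ k ∈ Iic c, ∏ i ∈ s, T i (k i) = ∏ i ∈ s, ∑ j ∈ Iic (c i), T i j := by
  have hIic : Iic c = s.finsupp fun i => Iic (c i) := by
    ext k
    simp only [mem_Iic, mem_finsupp_iff, Finsupp.le_def]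
    refine ⟨fun hk => ⟨fun i hi => hc ?_, fun i _ => hk i⟩, fun hk i => ?_⟩
    · rw [Finsupp.mem_support_iff] at hi ⊢
      have := hk i
      omega
    · by_cases hi : i ∈ s
      · exact hk.2 i hi
      · rw [Finsupp.notMem_support_iff.mp fun h => hi (hk.1 h)]; exact Nat.zero_le _
  rw [hIic, Finset.finsupp, sum_map, prod_sum]
  refine Finset.sum_congr (by congr!) fun g _ => ?_
  rw [← Finset.prod_attach s]
  exact Finset.prod_congr rfl fun i _ => by
    simp only [Function.Embedding.coeFn_mk, Finsupp.indicator_of_mem i.2]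

namespace TriangularDiffOp

abbrev IndexPair := (ℕ →₀ ℕ) × (ℕ →₀ ℕ)

theorem normPlus_add (m n : ℕ →₀ ℕ) : normPlus (m + n) = normPlus m + normPlus n :=
  Finsupp.sum_add_index' (h := fun i v => (2 * i + 1) * v) (fun _ => rfl) fun _ _ _ => by ring

theorem normMinus_add (m n : ℕ →₀ ℕ) : normMinus (m + n) = normMinus m + normMinus n :=
  Finsupp.sum_add_index' (h := fun i v => (2 * i - 1) * v) (fun _ => rfl) fun _ _ _ => by ring

theorem degS_add (m n : ℕ →₀ ℕ) : degS (m + n) = degS m + degS n :=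
  Finsupp.sum_add_index' (h := fun _ v => v) (fun _ => rfl) fun _ _ _ => rfl

theorem normMinus_mono {m n : ℕ →₀ ℕ} (h : m ≤ n) : normMinus m ≤ normMinus n := by
  obtain ⟨d, rfl⟩ := le_iff_exists_add.mp h
  rw [normMinus_add]; exact Nat.le_add_right _ _

theorem degS_mono {m n : ℕ →₀ ℕ} (h : m ≤ n) : degS m ≤ degS n := by
  obtain ⟨d, rfl⟩ := le_iff_exists_add.mp h
  rw [degS_add]; exact Nat.le_add_right _ _

theorem normMinus_le_normPlus (n : ℕ →₀ ℕ) : normMinus n ≤ normPlus n :=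
  sum_le_sum fun i _ => Nat.mul_le_mul_right _ (by omega)

theorem mul_apply_le_normPlus (n : ℕ →₀ ℕ) (i : ℕ) : (2 * i + 1) * n i ≤ normPlus n := by
  by_cases h : n i = 0
  · simp [h]
  · exact single_le_sum (f := fun j => (2 * j + 1) * n j) (fun _ _ => Nat.zero_le _)
      (Finsupp.mem_support_iff.mpr h)

noncomputable def normPlusBox (C : ℕ) : ℕ →₀ ℕ := Finsupp.indicator (range (C + 1)) fun _ _ => C

theorem normPlusBox_apply (C i : ℕ) : normPlusBox C i = if i ≤ C then C else 0 := by
  simp [normPlusBox, Finsupp.indicator_apply]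

theorem le_normPlusBox {n : ℕ →₀ ℕ} {C : ℕ} (h : normPlus n ≤ C) : n ≤ normPlusBox C := by
  intro i
  have := mul_apply_le_normPlus n i
  rw [normPlusBox_apply]
  split_ifs <;> nlinarith

theorem normPlusBox_mono {C C' : ℕ} (h : C ≤ C') : normPlusBox C ≤ normPlusBox C' := by
  intro i
  simp only [normPlusBox_apply]
  split_ifs <;> omega

noncomputable def window (μ : ℕ →₀ ℕ) : Finset IndexPair :=
  Iic μ ×ˢ Iic (normPlusBox (normMinus μ))

theorem mem_window_iff {μ : ℕ →₀ ℕ} {p : IndexPair} :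
    p ∈ window μ ↔ p.1 ≤ μ ∧ p.2 ≤ normPlusBox (normMinus μ) := by
  rw [window, mem_product, mem_Iic, mem_Iic]

theorem mem_window {μ : ℕ →₀ ℕ} {p : IndexPair} (h₁ : p.1 ≤ μ)
    (h₂ : normPlus p.2 ≤ normMinus p.1) : p ∈ window μ :=
  mem_window_iff.mpr ⟨h₁, le_normPlusBox (h₂.trans (normMinus_mono h₁))⟩

theorem window_mono {μ ν : ℕ →₀ ℕ} (h : μ ≤ ν) : window μ ⊆ window ν := fun _ hp =>
  have hp := mem_window_iff.mp hp
  mem_window_iff.mpr ⟨hp.1.trans h, hp.2.trans (normPlusBox_mono (normMinus_mono h))⟩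

-- `∂^d s^y = fallingFactor y d • s^(y - d)`
def fallingFactor (y d : ℕ →₀ ℕ) : ℕ := d.prod fun i e => (y i).descFactorial e

-- `∂^n ∘ s^m = ∑_{k ≤ n ⊓ m} leibnizCoeff n m k • s^(m - k) ∘ ∂^(n - k)`
def leibnizCoeff (n m k : ℕ →₀ ℕ) : ℕ := k.prod fun i e => (n i).choose e * (m i).descFactorial e

theorem fallingFactor_eq_prod {y d : ℕ →₀ ℕ} {s : Finset ℕ} (hd : d.support ⊆ s) :
    fallingFactor y d = ∏ i ∈ s, (y i).descFactorial (d i) :=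
  Finsupp.prod_of_support_subset d hd _ fun _ _ => Nat.descFactorial_zero _

theorem leibnizCoeff_eq_prod {n m k : ℕ →₀ ℕ} {s : Finset ℕ} (hk : k.support ⊆ s) :
    leibnizCoeff n m k = ∏ i ∈ s, (n i).choose (k i) * (m i).descFactorial (k i) :=
  Finsupp.prod_of_support_subset k hk _ fun _ _ => by simp

theorem fallingFactor_mul_fallingFactor {z m n n' : ℕ →₀ ℕ} (h : m ≤ z) :
    fallingFactor z n * fallingFactor (z - m + n') n' =
      ∑ k ∈ Iic (n ⊓ m), leibnizCoeff n m k * fallingFactor (z - m + n') (n + n' - k) := by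
  set s := n.support ∪ n'.support
  have hn : n.support ⊆ s := subset_union_left
  have hn' : n'.support ⊆ s := subset_union_right
  have hterm : ∀ k ∈ Iic (n ⊓ m), leibnizCoeff n m k * fallingFactor (z - m + n') (n + n' - k) =
      ∏ i ∈ s, (n i).choose (k i) * (m i).descFactorial (k i) *
        (z i - m i + n' i).descFactorial (n i + n' i - k i) := by
    intro k hk
    have hkn : k ≤ n := (mem_Iic.mp hk).trans inf_le_left
    rw [leibnizCoeff_eq_prod ((Finsupp.support_mono hkn).trans hn),
      fallingFactor_eq_prod (s := s), ← prod_mul_distrib]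
    · simp
    · intro i hi
      simp only [Finsupp.mem_support_iff, Finsupp.tsub_apply, Finsupp.add_apply] at hi
      by_cases hni : n i = 0
      · exact hn' (Finsupp.mem_support_iff.mpr (by omega))
      · exact hn (Finsupp.mem_support_iff.mpr hni)
  rw [sum_congr rfl hterm, Finsupp.sum_Iic_prod_eq_prod_sum
      ((Finsupp.support_mono inf_le_left).trans hn) fun i j =>
        (n i).choose j * (m i).descFactorial j * (z i - m i + n' i).descFactorial (n i + n' i - j),
    fallingFactor_eq_prod hn, fallingFactor_eq_prod hn', ← prod_mul_distrib]
  refine prod_congr rfl fun i _ => ?_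
  simpa using Nat.descFactorial_mul_descFactorial_eq_sum (n := n i) (n' := n' i) (h i)

noncomputable def termCoeff (p : IndexPair) (f : MvPowerSeries ℕ ℂ) (μ : ℕ →₀ ℕ) : ℂ :=
  if p.1 ≤ μ then fallingFactor (μ - p.1 + p.2) p.2 * MvPowerSeries.coeff (μ - p.1 + p.2) f
  else 0

theorem coeff_pdMulti (n ν : ℕ →₀ ℕ) (f : MvPowerSeries ℕ ℂ) :
    MvPowerSeries.coeff ν (pdMulti n f) =
      fallingFactor (ν + n) n * MvPowerSeries.coeff (ν + n) f := by
  have hfac : ∀ i, (ν i + n i).factorial / (ν i).factorial = (ν i + n i).descFactorial (n i) :=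
    fun i => by rw [Nat.descFactorial_eq_div (Nat.le_add_left _ _), Nat.add_sub_cancel]
  simp only [fallingFactor, Finsupp.prod, Nat.cast_prod, Finsupp.add_apply, ← hfac]
  rfl

theorem coeff_monomial_mul_pdMulti (m n μ : ℕ →₀ ℕ) (f : MvPowerSeries ℕ ℂ) :
    MvPowerSeries.coeff μ (MvPowerSeries.monomial m 1 * pdMulti n f) = termCoeff (m, n) f μ := by
  rw [MvPowerSeries.coeff_monomial_mul, coeff_pdMulti, one_mul]
  rfl

theorem le_of_termCoeff_ne_zero {p : IndexPair} {f : MvPowerSeries ℕ ℂ} {μ : ℕ →₀ ℕ}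
    (h : termCoeff p f μ ≠ 0) : p.1 ≤ μ := by
  by_contra hμ
  exact h (if_neg hμ)

def IsTriangularSymbol (a : IndexPair → ℂ) : Prop :=
  ∀ p, a p ≠ 0 → normPlus p.2 ≤ normMinus p.1

theorem coeff_applyOp {a : IndexPair → ℂ} (ha : IsTriangularSymbol a) (f : MvPowerSeries ℕ ℂ)
    {μ : ℕ →₀ ℕ} {S : Finset IndexPair} (hS : window μ ⊆ S) :
    MvPowerSeries.coeff μ (applyOp a f) = ∑ p ∈ S, a p * termCoeff p f μ := by
  change ∑ᶠ p, a p * MvPowerSeries.coeff μ (MvPowerSeries.monomial p.1 1 * pdMulti p.2 f) = _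
  simp only [coeff_monomial_mul_pdMulti]
  refine finsum_eq_sum_of_support_subset _ fun p hp => hS ?_
  obtain ⟨hap, hE⟩ := mul_ne_zero_iff.mp hp
  exact mem_window (le_of_termCoeff_ne_zero hE) (ha p hap)

theorem termCoeff_add_left (m m' n x : ℕ →₀ ℕ) (f : MvPowerSeries ℕ ℂ) :
    termCoeff (m + m', n) f (m + x) = termCoeff (m', n) f x := by
  simp only [termCoeff, add_le_add_iff_left, add_tsub_add_eq_tsub_left]

theorem termCoeff_tsub {x n m' n' k : ℕ →₀ ℕ} (f : MvPowerSeries ℕ ℂ) (hk : k ≤ n ⊓ m')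
    (hm : m' ≤ x + n) :
    termCoeff (m' - k, n + n' - k) f x =
      fallingFactor (x + n - m' + n') (n + n' - k) * MvPowerSeries.coeff (x + n - m' + n') f := by
  have hk' : ∀ i, k i ≤ n i ∧ k i ≤ m' i := fun i => le_min_iff.mp (hk i)
  -- If `m' - k ≰ x`, the right side vanishes as well: some `descFactorial` has too many factors.
  by_cases hx : m' - k ≤ x
  · have hidx : x - (m' - k) + (n + n' - k) = x + n - m' + n' := by
      ext i
      have := hx i; have := hm i; have := hk' i
      simp only [Finsupp.coe_tsub, Finsupp.coe_add, Pi.sub_apply, Pi.add_apply] at *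
      omega
    rw [termCoeff, if_pos hx, hidx]
  · obtain ⟨i, hi⟩ : ∃ i, x i + k i < m' i := by simpa [Finsupp.le_def] using hx
    have hlt : (x + n - m' + n') i < (n + n' - k) i := by
      have := hm i; have := hk' i
      simp only [Finsupp.coe_tsub, Finsupp.coe_add, Pi.sub_apply, Pi.add_apply] at *
      omega
    have hzero : fallingFactor (x + n - m' + n') (n + n' - k) = 0 :=
      prod_eq_zero (Finsupp.mem_support_iff.mpr (by omega))
        (Nat.descFactorial_eq_zero_iff_lt.mpr hlt)
    rw [termCoeff, if_neg hx, hzero, Nat.cast_zero, zero_mul]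

theorem fallingFactor_mul_termCoeff (n x : ℕ →₀ ℕ) (q : IndexPair) (f : MvPowerSeries ℕ ℂ) :
    (fallingFactor (x + n) n : ℂ) * termCoeff q f (x + n) =
      ∑ k ∈ Iic (n ⊓ q.1), (leibnizCoeff n q.1 k : ℂ) * termCoeff (q.1 - k, n + q.2 - k) f x := by
  obtain ⟨m', n'⟩ := q
  by_cases hm : m' ≤ x + n
  · rw [sum_congr rfl fun k hk => by rw [termCoeff_tsub f (mem_Iic.mp hk) hm], termCoeff,
      if_pos hm]
    simp only [← mul_assoc, ← sum_mul]
    congr 1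
    exact_mod_cast fallingFactor_mul_fallingFactor hm
  · rw [termCoeff, if_neg hm, mul_zero]
    refine (sum_eq_zero fun k hk => ?_).symm
    rw [termCoeff, if_neg, mul_zero]
    intro hx
    refine hm fun i => ?_
    have := hx i; have := le_min_iff.mp (mem_Iic.mp hk i)
    simp only [Finsupp.coe_tsub, Finsupp.coe_add, Pi.sub_apply, Pi.add_apply] at *
    omega

noncomputable def leibnizIndex (p q : IndexPair) (k : ℕ →₀ ℕ) : IndexPair :=
  (p.1 + (q.1 - k), p.2 + q.2 - k)

theorem normPlus_leibnizIndex_le {p q : IndexPair} {k : ℕ →₀ ℕ} (hk : k ≤ p.2 ⊓ q.1)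
    (hp : normPlus p.2 ≤ normMinus p.1) (hq : normPlus q.2 ≤ normMinus q.1) :
    normPlus (leibnizIndex p q k).2 ≤ normMinus (leibnizIndex p q k).1 := by
  have hk₂ : k ≤ p.2 + q.2 := (hk.trans inf_le_left).trans le_self_add
  have hk₁ : k ≤ q.1 := hk.trans inf_le_right
  have e₂ := normPlus_add (p.2 + q.2 - k) k
  have e₁ := normMinus_add (q.1 - k) k
  rw [tsub_add_cancel_of_le hk₂, normPlus_add] at e₂
  rw [tsub_add_cancel_of_le hk₁] at e₁
  have := normMinus_le_normPlus k
  simp only [leibnizIndex, normMinus_add]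
  omega

theorem degS_leibnizIndex_le (p q : IndexPair) (k : ℕ →₀ ℕ) :
    degS (leibnizIndex p q k).1 ≤ degS p.1 + degS q.1 := by
  simpa only [leibnizIndex, degS_add] using Nat.add_le_add_left (degS_mono tsub_le_self) _

theorem mem_window_of_leibnizIndex_eq {a b : IndexPair → ℂ} (ha : IsTriangularSymbol a)
    (hb : IsTriangularSymbol b) {p q r : IndexPair} {k : ℕ →₀ ℕ} (hap : a p ≠ 0) (hbq : b q ≠ 0)
    (hk : k ≤ p.2 ⊓ q.1) (hr : leibnizIndex p q k = r) :
    p ∈ window r.1 ∧ q ∈ window (r.1 + normPlusBox (normMinus r.1)) := by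
  subst hr
  have hp : p ∈ window (leibnizIndex p q k).1 := mem_window le_self_add (ha p hap)
  refine ⟨hp, mem_window ?_ (hb q hbq)⟩
  calc q.1 = (q.1 - k) + k := (tsub_add_cancel_of_le (hk.trans inf_le_right)).symm
    _ ≤ _ := add_le_add le_add_self ((hk.trans inf_le_left).trans (mem_window_iff.mp hp).2)

/-- Summing over these two windows is summing over all `(p, q)`:
see `mem_window_of_leibnizIndex_eq`. -/
noncomputable def compSymbol (a b : IndexPair → ℂ) (r : IndexPair) : ℂ :=
  ∑ p ∈ window r.1, ∑ q ∈ window (r.1 + normPlusBox (normMinus r.1)), ∑ k ∈ Iic (p.2 ⊓ q.1),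
    if leibnizIndex p q k = r then a p * b q * leibnizCoeff p.2 q.1 k else 0

theorem exists_of_compSymbol_ne_zero {a b : IndexPair → ℂ} {r : IndexPair}
    (h : compSymbol a b r ≠ 0) :
    ∃ p q k, a p ≠ 0 ∧ b q ≠ 0 ∧ k ≤ p.2 ⊓ q.1 ∧ leibnizIndex p q k = r := by
  obtain ⟨p, -, hp⟩ := exists_ne_zero_of_sum_ne_zero h
  obtain ⟨q, -, hq⟩ := exists_ne_zero_of_sum_ne_zero hp
  obtain ⟨k, hk, hne⟩ := exists_ne_zero_of_sum_ne_zero hq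
  obtain ⟨hr, hne⟩ := ite_ne_right_iff.mp hne
  exact ⟨p, q, k, left_ne_zero_of_mul (left_ne_zero_of_mul hne),
    right_ne_zero_of_mul (left_ne_zero_of_mul hne), mem_Iic.mp hk, hr⟩

theorem compSymbol_eq_sum {a b : IndexPair → ℂ} (ha : IsTriangularSymbol a)
    (hb : IsTriangularSymbol b) (r : IndexPair) {U V : Finset IndexPair} (hU : window r.1 ⊆ U)
    (hV : window (r.1 + normPlusBox (normMinus r.1)) ⊆ V) :
    compSymbol a b r = ∑ p ∈ U, ∑ q ∈ V, ∑ k ∈ Iic (p.2 ⊓ q.1),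
      if leibnizIndex p q k = r then a p * b q * leibnizCoeff p.2 q.1 k else 0 := by
  have hvanish : ∀ p q, ¬ (p ∈ window r.1 ∧ q ∈ window (r.1 + normPlusBox (normMinus r.1))) →
      ∑ k ∈ Iic (p.2 ⊓ q.1),
        (if leibnizIndex p q k = r then a p * b q * leibnizCoeff p.2 q.1 k else 0) = 0 := by
    refine fun p q hpq => sum_eq_zero fun k hk => not_not.mp fun hne => hpq ?_
    obtain ⟨hr, hne⟩ := ite_ne_right_iff.mp hne
    exact mem_window_of_leibnizIndex_eq ha hb (left_ne_zero_of_mul (left_ne_zero_of_mul hne))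
      (right_ne_zero_of_mul (left_ne_zero_of_mul hne)) (mem_Iic.mp hk) hr
  calc compSymbol a b r
      = ∑ p ∈ window r.1, ∑ q ∈ V, ∑ k ∈ Iic (p.2 ⊓ q.1),
          if leibnizIndex p q k = r then a p * b q * leibnizCoeff p.2 q.1 k else 0 :=
        sum_congr rfl fun p _ => sum_subset hV fun q _ hq => hvanish p q fun h => hq h.2
    _ = _ := sum_subset hU fun p _ hp => sum_eq_zero fun q _ => hvanish p q fun h => hp h.1

theorem IsTriangularSymbol.compSymbol {a b : IndexPair → ℂ} (ha : IsTriangularSymbol a)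
    (hb : IsTriangularSymbol b) : IsTriangularSymbol (compSymbol a b) := fun r hr => by
  obtain ⟨p, q, k, hap, hbq, hk, rfl⟩ := exists_of_compSymbol_ne_zero hr
  exact normPlus_leibnizIndex_le hk (ha p hap) (hb q hbq)

theorem degS_le_of_compSymbol_ne_zero {a b : IndexPair → ℂ} {B₁ B₂ : ℕ}
    (ha : ∀ p, a p ≠ 0 → degS p.1 ≤ B₁) (hb : ∀ p, b p ≠ 0 → degS p.1 ≤ B₂) :
    ∀ r, compSymbol a b r ≠ 0 → degS r.1 ≤ B₁ + B₂ := fun r hr => by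
  obtain ⟨p, q, k, hap, hbq, -, rfl⟩ := exists_of_compSymbol_ne_zero hr
  exact (degS_leibnizIndex_le p q k).trans (add_le_add (ha p hap) (hb q hbq))

theorem termCoeff_of_eq_add {p : IndexPair} {μ x : ℕ →₀ ℕ} (g : MvPowerSeries ℕ ℂ)
    (h : μ = p.1 + x) :
    termCoeff p g μ = fallingFactor (x + p.2) p.2 * MvPowerSeries.coeff (x + p.2) g := by
  subst h
  simp [termCoeff]

theorem termCoeff_applyOp {b : IndexPair → ℂ} (hb : IsTriangularSymbol b)
    (f : MvPowerSeries ℕ ℂ) {p : IndexPair} {μ : ℕ →₀ ℕ}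
    (hp : p.2 ≤ normPlusBox (normMinus μ)) :
    termCoeff p (applyOp b f) μ =
      ∑ q ∈ window (μ + normPlusBox (normMinus μ)), ∑ k ∈ Iic (p.2 ⊓ q.1),
        b q * leibnizCoeff p.2 q.1 k * termCoeff (leibnizIndex p q k) f μ := by
  by_cases hpμ : p.1 ≤ μ
  · obtain ⟨x, hx⟩ := le_iff_exists_add.mp hpμ
    have hwin : window (x + p.2) ⊆ window (μ + normPlusBox (normMinus μ)) :=
      window_mono (add_le_add (hx ▸ le_add_self) hp)
    rw [termCoeff_of_eq_add _ hx, coeff_applyOp hb f hwin, mul_sum]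
    refine sum_congr rfl fun q _ => ?_
    rw [mul_left_comm, fallingFactor_mul_termCoeff, mul_sum]
    refine sum_congr rfl fun k _ => ?_
    rw [hx, leibnizIndex, termCoeff_add_left]
    ring
  · rw [termCoeff, if_neg hpμ]
    refine (sum_eq_zero fun q _ => sum_eq_zero fun k _ => ?_).symm
    rw [termCoeff, if_neg fun h : (leibnizIndex p q k).1 ≤ μ => hpμ (le_self_add.trans h),
      mul_zero]

theorem sum_window_ite_mul_termCoeff {a b : IndexPair → ℂ} (ha : IsTriangularSymbol a)
    (hb : IsTriangularSymbol b) {p q : IndexPair} {k : ℕ →₀ ℕ} (hk : k ≤ p.2 ⊓ q.1)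
    (f : MvPowerSeries ℕ ℂ) (μ : ℕ →₀ ℕ) :
    ∑ r ∈ window μ, (if leibnizIndex p q k = r then a p * b q * leibnizCoeff p.2 q.1 k else 0) *
        termCoeff r f μ =
      a p * b q * leibnizCoeff p.2 q.1 k * termCoeff (leibnizIndex p q k) f μ := by
  simp only [ite_mul, zero_mul]
  rw [sum_ite_eq, ite_eq_left_iff]
  refine fun hW => not_not.mp fun hne => hW ?_
  obtain ⟨hne, hE⟩ := mul_ne_zero_iff.mp (Ne.symm hne)
  exact mem_window (le_of_termCoeff_ne_zero hE) (normPlus_leibnizIndex_le hk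
    (ha p (left_ne_zero_of_mul (left_ne_zero_of_mul hne)))
    (hb q (right_ne_zero_of_mul (left_ne_zero_of_mul hne))))

theorem applyOp_compSymbol {a b : IndexPair → ℂ} (ha : IsTriangularSymbol a)
    (hb : IsTriangularSymbol b) (f : MvPowerSeries ℕ ℂ) :
    applyOp (compSymbol a b) f = applyOp a (applyOp b f) := by
  ext μ
  set W := window μ
  set W' := window (μ + normPlusBox (normMinus μ))
  calc MvPowerSeries.coeff μ (applyOp (compSymbol a b) f)
      = ∑ r ∈ W, compSymbol a b r * termCoeff r f μ := coeff_applyOp (ha.compSymbol hb) f subset_rfl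
    _ = ∑ r ∈ W, ∑ p ∈ W, ∑ q ∈ W', ∑ k ∈ Iic (p.2 ⊓ q.1),
          (if leibnizIndex p q k = r then a p * b q * leibnizCoeff p.2 q.1 k else 0) *
            termCoeff r f μ := by
        refine sum_congr rfl fun r hr => ?_
        have hr₁ := (mem_window_iff.mp hr).1
        rw [compSymbol_eq_sum ha hb r (window_mono hr₁)
          (window_mono (add_le_add hr₁ (normPlusBox_mono (normMinus_mono hr₁))))]
        simp only [sum_mul]
        rfl
    _ = ∑ p ∈ W, ∑ q ∈ W', ∑ k ∈ Iic (p.2 ⊓ q.1), ∑ r ∈ W,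
          (if leibnizIndex p q k = r then a p * b q * leibnizCoeff p.2 q.1 k else 0) *
            termCoeff r f μ := by
        rw [sum_comm]
        refine sum_congr rfl fun p _ => ?_
        rw [sum_comm]
        exact sum_congr rfl fun q _ => sum_comm
    _ = ∑ p ∈ W, a p * termCoeff p (applyOp b f) μ := by
        refine sum_congr rfl fun p hp => ?_
        rw [termCoeff_applyOp hb f (mem_window_iff.mp hp).2, mul_sum]
        refine sum_congr rfl fun q _ => ?_
        rw [mul_sum]
        refine sum_congr rfl fun k hk => ?_
        rw [sum_window_ite_mul_termCoeff ha hb (mem_Iic.mp hk)]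
        ring
    _ = MvPowerSeries.coeff μ (applyOp a (applyOp b f)) := (coeff_applyOp ha _ subset_rfl).symm

theorem IsTriangularSymbol.add {a b : IndexPair → ℂ} (ha : IsTriangularSymbol a)
    (hb : IsTriangularSymbol b) : IsTriangularSymbol fun p => a p + b p := fun p hp =>
  (Function.support_add a b hp).elim (ha p) (hb p)

theorem IsTriangularSymbol.const_mul {a : IndexPair → ℂ} (ha : IsTriangularSymbol a) (c : ℂ) :
    IsTriangularSymbol fun p => c * a p := fun p hp => ha p (right_ne_zero_of_mul hp)

theorem applyOp_add {a b : IndexPair → ℂ} (ha : IsTriangularSymbol a) (hb : IsTriangularSymbol b)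
    (f : MvPowerSeries ℕ ℂ) : applyOp (fun p => a p + b p) f = applyOp a f + applyOp b f := by
  ext μ
  rw [map_add, coeff_applyOp (ha.add hb) f subset_rfl, coeff_applyOp ha f subset_rfl,
    coeff_applyOp hb f subset_rfl, ← sum_add_distrib]
  simp only [add_mul]

theorem applyOp_const_mul {a : IndexPair → ℂ} (ha : IsTriangularSymbol a) (c : ℂ)
    (f : MvPowerSeries ℕ ℂ) : applyOp (fun p => c * a p) f = c • applyOp a f := by
  ext μ
  rw [MvPowerSeries.coeff_smul, coeff_applyOp (ha.const_mul c) f subset_rfl, coeff_applyOp ha f subset_rfl,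
    mul_sum]
  simp only [mul_assoc]

end TriangularDiffOp

open TriangularDiffOp

theorem IsTriangular.add {D₁ D₂ : MvPowerSeries ℕ ℂ → MvPowerSeries ℕ ℂ}
    (h₁ : IsTriangular D₁) (h₂ : IsTriangular D₂) : IsTriangular fun f => D₁ f + D₂ f := by
  obtain ⟨a, ha : IsTriangularSymbol a, ⟨B₁, hB₁⟩, hDa⟩ := h₁
  obtain ⟨b, hb, ⟨B₂, hB₂⟩, hDb⟩ := h₂
  refine ⟨fun p => a p + b p, ha.add hb, ⟨max B₁ B₂, fun p hp => ?_⟩, fun f => ?_⟩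
  · exact (Function.support_add a b hp).elim (fun h => (hB₁ p h).trans (le_max_left _ _))
      fun h => (hB₂ p h).trans (le_max_right _ _)
  · dsimp only
    rw [hDa, hDb, applyOp_add ha hb]

theorem IsTriangular.const_smul {D : MvPowerSeries ℕ ℂ → MvPowerSeries ℕ ℂ}
    (h : IsTriangular D) (c : ℂ) : IsTriangular fun f => c • D f := by
  obtain ⟨a, ha : IsTriangularSymbol a, ⟨B, hB⟩, hDa⟩ := h
  refine ⟨fun p => c * a p, ha.const_mul c,
    ⟨B, fun p hp => hB p (right_ne_zero_of_mul hp)⟩, fun f => ?_⟩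
  dsimp only
  rw [hDa, applyOp_const_mul ha]

theorem IsTriangular.comp {D₁ D₂ : MvPowerSeries ℕ ℂ → MvPowerSeries ℕ ℂ}
    (h₁ : IsTriangular D₁) (h₂ : IsTriangular D₂) : IsTriangular (D₁ ∘ D₂) := by
  obtain ⟨a, ha : IsTriangularSymbol a, ⟨B₁, hB₁⟩, hDa⟩ := h₁
  obtain ⟨b, hb, ⟨B₂, hB₂⟩, hDb⟩ := h₂
  refine ⟨compSymbol a b, ha.compSymbol hb, ⟨B₁ + B₂, degS_le_of_compSymbol_ne_zero hB₁ hB₂⟩,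
    fun f => ?_⟩
  rw [Function.comp_apply, hDb, hDa, applyOp_compSymbol ha hb]

/-- Formal triangular differential operators are closed under addition, scalar
multiplication and composition, i.e. they form a (non-commutative) subalgebra of the
formal differential operators on `ℂ[[s_*]]`. -/
theorem stmt17 (D₁ D₂ : MvPowerSeries ℕ ℂ → MvPowerSeries ℕ ℂ) (c : ℂ)
    (h₁ : IsTriangular D₁) (h₂ : IsTriangular D₂) :
    IsTriangular (fun f => D₁ f + D₂ f)
    ∧ IsTriangular (fun f => c • D₁ f)
    ∧ IsTriangular (D₁ ∘ D₂) :=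
  ⟨h₁.add h₂, h₁.const_smul c, h₁.comp h₂⟩
end
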